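/- arXiv:2509.06034 — 5 statements merged into one kernel-verified Lean document; each statement's English description precedes it below -/
import Mathlib

section
/- For a list of integers a = (a_1,...,a_k) and a cyclic permutation σ of {1,...,k}, the difference ε(a^σ) − ε(a), where ε(a) = 1 + Σ_{j=1}^k j·(a_j + 1) and a^σ = (a_{σ(1)},...,a_{σ(k)}), equals Σ_{j<i, σ(j)>σ(i)} (a_{σ(i)} − a_{σ(j)}). -/
/-!
Reindexing `ε(a)` along `σ` gives `ε(a^σ) − ε(a) = Σ_j (j − σ j)·a_{σ j}`. Counting the indices
below `j` once by position and once by value, the common ones cancel and `j − σ j` becomes the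
number of inversions `(j', j)` minus the number of inversions `(j, j')`; collecting the
right-hand side by index gives the same coefficients.
-/

open Finset

/-- `ε(a) = 1 + Σ_{j=1}^k j·(a_j + 1)`, with `Fin k` 0-indexed, so position `j` contributes
weight `j+1`. -/
def epsSign {k : ℕ} (a : Fin k → ℤ) : ℤ :=
  1 + ∑ j : Fin k, (((j : ℕ) : ℤ) + 1) * (a j + 1)

theorem sum_filter_rel_sub_eq_sum_card_sub_mul {ι R : Type*} [Fintype ι] [CommRing R]
    (r : ι → ι → Prop) [DecidableRel r] (b : ι → R) :
    ∑ p ∈ univ.filter (fun p : ι × ι => r p.1 p.2), (b p.2 - b p.1) =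
      ∑ i, ((#{j | r j i} : R) - #{j | r i j}) * b i := by
  rw [sum_sub_distrib, sum_filter, sum_filter, Fintype.sum_prod_type, Fintype.sum_prod_type,
    sum_comm]
  simp only [sub_mul, sum_sub_distrib, natCast_card_filter, sum_mul, ite_mul, one_mul, zero_mul]

theorem val_sub_val_perm_eq {k : ℕ} (σ : Equiv.Perm (Fin k)) (i : Fin k) :
    ((i : ℕ) : ℤ) - ((σ i : ℕ) : ℤ) =
      (#{j | j < i ∧ σ i < σ j} : ℤ) - #{j | i < j ∧ σ j < σ i} := by
  have hi : ((i : ℕ) : ℤ) = ∑ j, if j < i then 1 else 0 := by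
    rw [← natCast_card_filter, filter_gt_eq_Iio, Fin.card_Iio]
  have hσi : ((σ i : ℕ) : ℤ) = ∑ j, if σ j < σ i then 1 else 0 := by
    rw [Equiv.sum_comp σ (fun j => if j < σ i then (1 : ℤ) else 0), ← natCast_card_filter,
      filter_gt_eq_Iio, Fin.card_Iio]
  rw [hi, hσi, natCast_card_filter, natCast_card_filter, ← sum_sub_distrib, ← sum_sub_distrib]
  refine sum_congr rfl fun j _ => ?_
  rcases lt_trichotomy j i with hji | rfl | hij
  · rcases (σ.injective.ne hji.ne).lt_or_gt with hσ | hσ <;>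
      simp [hji, hji.le, hσ, hσ.not_gt]
  · simp
  · simp [hij, hij.not_gt]

theorem epsSign_comp_perm_sub {k : ℕ} (a : Fin k → ℤ) (σ : Equiv.Perm (Fin k)) :
    epsSign (fun j => a (σ j)) - epsSign a =
      ∑ j : Fin k, (((j : ℕ) : ℤ) - ((σ j : ℕ) : ℤ)) * a (σ j) := by
  have hreindex : epsSign a = 1 + ∑ j, (((σ j : ℕ) : ℤ) + 1) * (a (σ j) + 1) := by
    rw [epsSign, Equiv.sum_comp σ (fun j => (((j : ℕ) : ℤ) + 1) * (a j + 1))]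
  have hzero : ∑ j : Fin k, (((j : ℕ) : ℤ) - ((σ j : ℕ) : ℤ)) = 0 := by
    rw [sum_sub_distrib, Equiv.sum_comp σ (fun j => ((j : ℕ) : ℤ)), sub_self]
  calc epsSign (fun j => a (σ j)) - epsSign a
      = ∑ j : Fin k, ((((j : ℕ) : ℤ) - ((σ j : ℕ) : ℤ)) * a (σ j)
          + (((j : ℕ) : ℤ) - ((σ j : ℕ) : ℤ))) := by
        rw [epsSign, hreindex, add_sub_add_left_eq_sub, ← sum_sub_distrib]
        exact sum_congr rfl fun j _ => by ring
    _ = _ := by rw [sum_add_distrib, hzero, add_zero]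

theorem eps_cyclic_difference_general {k : ℕ} (a : Fin k → ℤ)
    (σ : Equiv.Perm (Fin k)) :
    epsSign (fun j => a (σ j)) - epsSign a =
      ∑ p ∈ univ.filter (fun p : Fin k × Fin k => p.1 < p.2 ∧ σ p.2 < σ p.1),
        (a (σ p.2) - a (σ p.1)) := by
  rw [epsSign_comp_perm_sub,
    sum_filter_rel_sub_eq_sum_card_sub_mul (fun i j => i < j ∧ σ j < σ i) (fun i => a (σ i))]
  exact sum_congr rfl fun i _ => by rw [val_sub_val_perm_eq]

/-- For a list of integers `a = (a_1,...,a_k)` and a cyclic permutation `σ` of `{1,...,k}`,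
`ε(a^σ) − ε(a) = Σ_{j<i, σ(j)>σ(i)} (a_{σ(i)} − a_{σ(j)})`. -/
theorem eps_cyclic_difference {k : ℕ} (hk : 1 ≤ k) (a : Fin k → ℤ)
    (σ : Equiv.Perm (Fin k)) (hσ : ∃ t : Fin k, ∀ j, σ j = j + t) :
    epsSign (fun j => a (σ j)) - epsSign a =
      ∑ p ∈ univ.filter (fun p : Fin k × Fin k => p.1 < p.2 ∧ σ p.2 < σ p.1),
        (a (σ p.2) - a (σ p.1)) :=
  eps_cyclic_difference_general a σ
end

section
/- Let σ be the cyclic permutation of {1,...,k} given by adding t modulo k (so σ(j) = j + t for j ≤ k − t and σ(j) = j + t − k otherwise). Then for any list of integers a_1,...,a_k, Σ_{j=1}^k a_{σ(j)}·(j − σ(j)) = Σ_{j=1}^{k−t} Σ_{i=k−t+1}^{k} (a_{σ(i)} − a_{σ(j)}). -/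
/-! The displacement `j − σ(j)` is `−t` on the first `k − t` indices and `k − t` on the last `t`,
so both sides equal `(k − t)·B − t·A`, where `A` and `B` are the sums of `a ∘ σ` over these
two blocks. -/

open Finset

/-- The cyclic shift `σ` of `{1,...,k}` by `t`: `σ(j) = j + t` for `j ≤ k − t`,
and `σ(j) = j + t − k` otherwise. -/
def cycShift (k t : ℕ) : ℕ → ℕ := fun j => if j ≤ k - t then j + t else j + t - k

section
variable {k t j : ℕ}

theorem cycShift_of_le (h : j ≤ k - t) : cycShift k t j = j + t := if_pos h

theorem cycShift_of_lt (h : k - t < j) : cycShift k t j = j + t - k := if_neg h.not_ge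

theorem sub_cycShift_of_le (h : j ≤ k - t) : (j : ℤ) - cycShift k t j = -t := by
  rw [cycShift_of_le h]
  push_cast
  ring

theorem sub_cycShift_of_lt (h : k - t < j) : (j : ℤ) - cycShift k t j = k - t := by
  rw [cycShift_of_lt h]
  omega

end

theorem Finset.sum_Icc_one_split {M : Type*} [AddCommMonoid M] (f : ℕ → M) {m n : ℕ}
    (h : m ≤ n) : ∑ i ∈ Icc 1 n, f i = ∑ i ∈ Icc 1 m, f i + ∑ i ∈ Icc (m + 1) n, f i := by
  have Icc_one (b : ℕ) : Icc 1 b = Ioc 0 b := Icc_add_one_left_eq_Ioc 0 b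
  rw [Icc_one, Icc_one, Icc_add_one_left_eq_Ioc, sum_Ioc_consecutive f m.zero_le h]

theorem Finset.sum_sum_sub {ι κ G : Type*} [AddCommGroup G] (s : Finset ι) (u : Finset κ)
    (f : ι → G) (g : κ → G) :
    ∑ j ∈ s, ∑ i ∈ u, (g i - f j) = #s • ∑ i ∈ u, g i - #u • ∑ j ∈ s, f j := by
  simp only [sum_sub_distrib, sum_const, sum_nsmul]

theorem cyclic_shift_weighted_sum_general (k t : ℕ) (htk : t ≤ k)
    (a : ℕ → ℤ) :
    ∑ j ∈ Icc 1 k, a (cycShift k t j) * ((j : ℤ) - (cycShift k t j : ℤ)) =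
      ∑ j ∈ Icc 1 (k - t), ∑ i ∈ Icc (k - t + 1) k,
        (a (cycShift k t i) - a (cycShift k t j)) := by
  have unshifted : ∑ j ∈ Icc 1 (k - t), a (cycShift k t j) * ((j : ℤ) - cycShift k t j) =
      -(t * ∑ j ∈ Icc 1 (k - t), a (cycShift k t j)) := by
    rw [mul_sum, ← sum_neg_distrib]
    refine sum_congr rfl fun j hj => ?_
    rw [sub_cycShift_of_le (mem_Icc.1 hj).2]
    ring
  have wrapped : ∑ i ∈ Icc (k - t + 1) k, a (cycShift k t i) * ((i : ℤ) - cycShift k t i) =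
      (k - t) * ∑ i ∈ Icc (k - t + 1) k, a (cycShift k t i) := by
    rw [mul_sum]
    refine sum_congr rfl fun i hi => ?_
    rw [sub_cycShift_of_lt (mem_Icc.1 hi).1, mul_comm]
  rw [sum_Icc_one_split _ (Nat.sub_le k t), unshifted, wrapped, sum_sum_sub, Nat.card_Icc,
    Nat.card_Icc, Nat.add_sub_cancel, Nat.add_sub_add_right, Nat.sub_sub_self htk]
  simp only [nsmul_eq_mul, Nat.cast_sub htk]
  ring

/-- For the cyclic permutation `σ` of `{1,...,k}` given by adding `t` modulo `k`,
`Σ_{j=1}^k a_{σ(j)}·(j − σ(j)) = Σ_{j=1}^{k−t} Σ_{i=k−t+1}^{k} (a_{σ(i)} − a_{σ(j)})`. -/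
theorem cyclic_shift_weighted_sum (k t : ℕ) (hk : 1 ≤ k) (ht1 : 1 ≤ t) (htk : t ≤ k)
    (a : ℕ → ℤ) :
    ∑ j ∈ Icc 1 k, a (cycShift k t j) * ((j : ℤ) - (cycShift k t j : ℤ)) =
      ∑ j ∈ Icc 1 (k - t), ∑ i ∈ Icc (k - t + 1) k,
        (a (cycShift k t i) - a (cycShift k t j)) :=
  cyclic_shift_weighted_sum_general k t htk a
end

section
/- Let a = (a_1,...,a_k) be a list of integers, fix 1 ≤ i ≤ k+1 and 0 ≤ k_2 ≤ k+1−i, let g be an integer, and write a = a⟨1⟩ ⊗ a⟨2⟩ ⊗ a⟨3⟩ with a⟨1⟩ = (a_1,...,a_{i−1}), a⟨2⟩ = (a_i,...,a_{i+k_2−1}), a⟨3⟩ = (a_{i+k_2},...,a_k). Define ε''(a) = Σ_j j·a_j. Then ε''(a⟨1⟩, |a⟨2⟩| + g + k_2, a⟨3⟩) + ε''(a⟨2⟩) ≡ ε''(a) + i·k_2 + k_2·|a⟨3⟩| + |a| + |a⟨1⟩| + i·g (mod 2), where |·| denotes the sum of the entries of a list, and (a⟨1⟩, m, a⟨3⟩)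 denotes the list obtained by replacing the middle block a⟨2⟩ with a single entry m. -/
/-!
Write `a = A ++ B ++ C` with `|A| = i - 1`. Since `ε''` is additive up to the shift term
`|x|·Σy` under concatenation, both sides expand into the same `ε''(A), ε''(B), ε''(C)` and the
congruence reduces to `(|B| + k₂)·Σ C + 2·Σ A ≡ 0`. Here `|B| = k₂` unless `B` runs past the
end of `a`, in which case `C` is empty.
-/

open Finset

/-- `ε''(b) = Σ_{j=1}^m j·b_j` for a list of integers `b` (0-indexed: position `j` has
weight `j+1`). -/
def epsDD (b : List ℤ) : ℤ := ∑ j ∈ range b.length, ((j : ℤ) + 1) * b.getD j 0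

theorem List.sum_range_getD {M : Type*} [AddCommMonoid M] (l : List M) :
    ∑ j ∈ Finset.range l.length, l.getD j 0 = l.sum := by
  induction l with
  | nil => simp
  | cons c l ih =>
    rw [List.length_cons, Finset.sum_range_succ', List.sum_cons, ← ih, add_comm]
    rfl

theorem epsDD_cons (c : ℤ) (l : List ℤ) : epsDD (c :: l) = c + l.sum + epsDD l := by
  simp only [epsDD, List.length_cons, Finset.sum_range_succ', List.getD_cons_succ,
    List.getD_cons_zero, Nat.cast_add, Nat.cast_one, add_mul (_ + 1 : ℤ), one_mul,
    Finset.sum_add_distrib, List.sum_range_getD]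
  ring

theorem epsDD_append (x y : List ℤ) :
    epsDD (x ++ y) = epsDD x + x.length * y.sum + epsDD y := by
  induction x with
  | nil => simp [epsDD]
  | cons c l ih =>
    rw [List.cons_append, epsDD_cons, epsDD_cons, ih, List.sum_append, List.length_cons]
    push_cast
    ring

theorem epsDD_append_cons_add_epsDD (A B C : List ℤ) (m : ℤ) :
    epsDD (A ++ m :: C) + epsDD B + A.length * B.sum + B.length * C.sum
      = epsDD (A ++ (B ++ C)) + (A.length + 1) * m + C.sum := by
  simp only [epsDD_append, epsDD_cons, List.sum_append, List.sum_cons]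
  ring

theorem List.length_take_drop_mul_sum_drop (a : List ℤ) (p k : ℕ) :
    ((a.drop p).take k).length * (a.drop (p + k)).sum = k * (a.drop (p + k)).sum := by
  by_cases h : p + k ≤ a.length
  · rw [List.length_take, List.length_drop, min_eq_left (by omega)]
  · rw [List.drop_eq_nil_of_le (show a.length ≤ p + k by omega), List.sum_nil, mul_zero,
      mul_zero]

theorem epsDD_split_general (a : List ℤ) (i k2 : ℕ) (g : ℤ)
    (hi1 : 1 ≤ i) (hi2 : i ≤ a.length + 1) :
    Int.ModEq 2
      (epsDD (a.take (i - 1) ++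
          (((a.drop (i - 1)).take k2).sum + g + (k2 : ℤ)) :: a.drop (i - 1 + k2))
        + epsDD ((a.drop (i - 1)).take k2))
      (epsDD a + (i : ℤ) * (k2 : ℤ) + (k2 : ℤ) * (a.drop (i - 1 + k2)).sum
        + a.sum + (a.take (i - 1)).sum + (i : ℤ) * g) := by
  obtain ⟨p, rfl⟩ : ∃ p, i = p + 1 := ⟨i - 1, by omega⟩
  rw [Nat.add_sub_cancel] at *
  set A := a.take p
  set B := (a.drop p).take k2
  set C := a.drop (p + k2)
  have hA : A.length = p := List.length_take_of_le (by omega)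
  have hsplit : a = A ++ (B ++ C) := by
    rw [show C = (a.drop p).drop k2 from List.drop_drop.symm, List.take_append_drop,
      List.take_append_drop]
  have hsum : a.sum = A.sum + B.sum + C.sum := by
    rw [hsplit, List.sum_append, List.sum_append, add_assoc]
  have hexpand := epsDD_append_cons_add_epsDD A B C (B.sum + g + k2)
  have hBC := a.length_take_drop_mul_sum_drop p k2
  rw [← hsplit, hA] at hexpand
  rw [hsum]
  refine Int.modEq_iff_dvd.mpr ⟨k2 * C.sum + A.sum, ?_⟩
  push_cast
  linear_combination -hexpand + hBC

/-- Splitting congruence for `ε''` (Lemma 2.10(2) of [ST1]): with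
`a⟨1⟩ = (a_1,...,a_{i−1})`, `a⟨2⟩ = (a_i,...,a_{i+k₂−1})`, `a⟨3⟩ = (a_{i+k₂},...,a_k)`,
`ε''(a⟨1⟩, |a⟨2⟩|+g+k₂, a⟨3⟩) + ε''(a⟨2⟩)
  ≡ ε''(a) + i·k₂ + k₂·|a⟨3⟩| + |a| + |a⟨1⟩| + i·g (mod 2)`. -/
theorem epsDD_split (a : List ℤ) (i k2 : ℕ) (g : ℤ)
    (hi1 : 1 ≤ i) (hi2 : i ≤ a.length + 1) (hk2 : k2 ≤ a.length + 1 - i) :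
    Int.ModEq 2
      (epsDD (a.take (i - 1) ++
          (((a.drop (i - 1)).take k2).sum + g + (k2 : ℤ)) :: a.drop (i - 1 + k2))
        + epsDD ((a.drop (i - 1)).take k2))
      (epsDD a + (i : ℤ) * (k2 : ℤ) + (k2 : ℤ) * (a.drop (i - 1 + k2)).sum
        + a.sum + (a.take (i - 1)).sum + (i : ℤ) * g) :=
  epsDD_split_general a i k2 g hi1 hi2
end

section
/- With notation as in the splitting lemma: a = (a_1,...,a_k) integers, 1 ≤ i ≤ k+1, 0 ≤ k_2 ≤ k+1−i, k_1 = k+1−k_2, g an integer, a⟨1⟩,a⟨2⟩,a⟨3⟩ the three consecutive blocks, ε(b) := 1 + Σ_j j(b_j+1) for a list b. Then ε(a⟨1⟩, |a⟨2⟩|+g+k_2, a⟨3⟩) + ε(a⟨2⟩) ≡ ε(a) + |a| + k + |a⟨1⟩| + i·g + k_2·|a⟨3⟩| + k_1·k_2 + i·k_2 (mod 2). -/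
/-!
Concatenation shifts every weight of the second list by the length of the first, so
`ε(x ++ y) = ε(x) + ε(y) - 1 + len(x)·(|y| + len(y))`. Expanding both sides along the blocks
`a = a⟨1⟩ ++ a⟨2⟩ ++ a⟨3⟩` and `(a⟨1⟩, m, a⟨3⟩) = a⟨1⟩ ++ [m] ++ a⟨3⟩` turns them into polynomials
in the block sums and lengths, whose difference is twice an explicit integer.
-/

open Finset

/-- `ε(b) = 1 + Σ_{j=1}^m j·(b_j + 1)` for a list of integers `b` (0-indexed: position `j`
has weight `j+1`). -/
def epsL (b : List ℤ) : ℤ := 1 + ∑ j ∈ range b.length, ((j : ℤ) + 1) * (b.getD j 0 + 1)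

lemma sum_range_length_getD (l : List ℤ) : ∑ j ∈ range l.length, l.getD j 0 = l.sum := by
  induction l with
  | nil => simp
  | cons c t ih =>
    rw [List.length_cons, sum_range_succ']
    simp only [List.getD_cons_succ, List.getD_cons_zero, List.sum_cons, ih]
    ring

lemma epsL_cons (c : ℤ) (l : List ℤ) :
    epsL (c :: l) = epsL l + c + 1 + (l.sum + l.length) := by
  unfold epsL
  rw [List.length_cons, sum_range_succ']
  simp only [List.getD_cons_succ, List.getD_cons_zero, Nat.cast_add, Nat.cast_one,
    add_mul (_ + 1 : ℤ) 1, one_mul, sum_add_distrib, sum_range_length_getD, sum_const,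
    card_range, nsmul_eq_mul, CharP.cast_eq_zero]
  ring

lemma epsL_append (l₁ l₂ : List ℤ) :
    epsL (l₁ ++ l₂) = epsL l₁ + epsL l₂ - 1 + l₁.length * (l₂.sum + l₂.length) := by
  induction l₁ with
  | nil => simp [epsL]
  | cons c t ih =>
    rw [List.cons_append, epsL_cons, epsL_cons, ih]
    simp only [List.sum_append, List.length_append, List.length_cons]
    push_cast
    ring

lemma epsL_singleton (c : ℤ) : epsL [c] = c + 2 := by
  simp [epsL, add_comm, add_left_comm]

theorem epsL_split_blocks (p q r : List ℤ) (g : ℤ) :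
    epsL (p ++ (q.sum + g + q.length) :: r) + epsL q ≡
      epsL (p ++ q ++ r) + (p ++ q ++ r).sum + (p ++ q ++ r).length + p.sum
        + (p.length + 1) * g + q.length * r.sum
        + (p.length + r.length + 1) * q.length + (p.length + 1) * q.length [ZMOD 2] := by
  rw [← List.singleton_append, epsL_append, epsL_append, epsL_append, epsL_append,
    epsL_singleton]
  simp only [List.sum_append, List.length_append, List.sum_singleton, List.length_singleton]
  push_cast
  exact Int.modEq_iff_dvd.mpr ⟨q.length * r.sum + q.length * r.length + p.sum
    + p.length * q.length + q.length - 1, by ring⟩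

/-- Splitting congruence for `ε` (Lemma 2.10(3) of [ST1]): with `k₁ = k + 1 − k₂` and the
three consecutive blocks `a⟨1⟩ = (a_1,...,a_{i−1})`, `a⟨2⟩ = (a_i,...,a_{i+k₂−1})`,
`a⟨3⟩ = (a_{i+k₂},...,a_k)`,
`ε(a⟨1⟩, |a⟨2⟩|+g+k₂, a⟨3⟩) + ε(a⟨2⟩)
  ≡ ε(a) + |a| + k + |a⟨1⟩| + i·g + k₂·|a⟨3⟩| + k₁·k₂ + i·k₂ (mod 2)`. -/
theorem epsL_split (a : List ℤ) (i k2 : ℕ) (g : ℤ)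
    (hi1 : 1 ≤ i) (hi2 : i ≤ a.length + 1) (hk2 : k2 ≤ a.length + 1 - i) :
    Int.ModEq 2
      (epsL (a.take (i - 1) ++
          (((a.drop (i - 1)).take k2).sum + g + (k2 : ℤ)) :: a.drop (i - 1 + k2))
        + epsL ((a.drop (i - 1)).take k2))
      (epsL a + a.sum + (a.length : ℤ) + (a.take (i - 1)).sum + (i : ℤ) * g
        + (k2 : ℤ) * (a.drop (i - 1 + k2)).sum
        + ((a.length + 1 - k2 : ℕ) : ℤ) * (k2 : ℤ) + (i : ℤ) * (k2 : ℤ)) := by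
  set p := a.take (i - 1)
  set q := (a.drop (i - 1)).take k2
  set r := a.drop (i - 1 + k2)
  have ha : a = p ++ q ++ r := by
    rw [List.append_assoc, show r = (a.drop (i - 1)).drop k2 by rw [List.drop_drop],
      List.take_append_drop, List.take_append_drop]
  have hp : p.length = i - 1 := by simp only [p, List.length_take]; omega
  have hq : q.length = k2 := by simp only [q, List.length_take, List.length_drop]; omega
  have hi : (i : ℤ) = p.length + 1 := by omega
  have hk1 : ((a.length + 1 - k2 : ℕ) : ℤ) = p.length + r.length + 1 := by
    rw [ha]; simp only [List.length_append]; omega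
  rw [hi, hk1, ← hq]
  conv_rhs => rw [ha]
  exact epsL_split_blocks p q r g
end

section
/- With the same splitting notation and additionally a fixed integer n, defining ε_p(b) := n·|b| + Σ_j j·b_j for a list b of integers: ε_p(a⟨1⟩, |a⟨2⟩|+g+k_2, a⟨3⟩) + ε(a⟨2⟩) ≡ ε_p(a) + |a| + k + |a⟨1⟩| + (i+n)·g + k_2·|a⟨3⟩| + k_1·k_2 + i·k_2 + n (mod 2). -/
/-!
Writing `ε_p^n` for the dependence on `n`, peeling off the first entry gives
`ε_p^n(x :: t) = (n+1)(x+1) + ε_p^{n+1}(t)`, whence `ε_p^{n+m}(b) = ε_p^n(b) + m(|b| + length b)`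
and `ε_p` splits additively over a concatenation; moreover `ε(b) = 1 + ε_p^0(b)`. So replacing
the middle block `a⟨2⟩` by a single entry changes `ε_p` by an explicit polynomial in `n`, `g` and
the sums and lengths of the blocks, and this polynomial differs from the claimed correction by an
even number.
-/

open Finset

/-- `ε_p(b) = Σ_{j=1}^m (n+j)·(b_j + 1)` for a fixed integer `n`. -/
def epsP (n : ℕ) (b : List ℤ) : ℤ :=
  ∑ j ∈ range b.length, ((n : ℤ) + (j : ℤ) + 1) * (b.getD j 0 + 1)

@[simp]
lemma epsP_nil (n : ℕ) : epsP n [] = 0 := rfl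

lemma epsP_cons (n : ℕ) (x : ℤ) (t : List ℤ) :
    epsP n (x :: t) = ((n : ℤ) + 1) * (x + 1) + epsP (n + 1) t := by
  simp only [epsP, List.length_cons, sum_range_succ', List.getD_cons_succ, List.getD_cons_zero]
  rw [add_comm]
  congr 1
  exact sum_congr rfl fun j _ => by push_cast; ring

lemma epsP_add (n m : ℕ) (b : List ℤ) :
    epsP (n + m) b = epsP n b + (m : ℤ) * (b.sum + b.length) := by
  induction b generalizing n with
  | nil => simp
  | cons x t ih =>
    rw [epsP_cons, epsP_cons, Nat.add_right_comm, ih]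
    simp only [List.sum_cons, List.length_cons]
    push_cast
    ring

lemma epsP_append (n : ℕ) (b c : List ℤ) :
    epsP n (b ++ c) = epsP n b + epsP (n + b.length) c := by
  induction b generalizing n with
  | nil => simp
  | cons x t ih =>
    rw [List.cons_append, epsP_cons, ih, epsP_cons, List.length_cons, Nat.add_right_comm,
      Nat.add_assoc n, add_assoc]

lemma epsL_eq_one_add_epsP_zero (b : List ℤ) : epsL b = 1 + epsP 0 b := by
  simp [epsL, epsP]

lemma epsP_replace_block_add_epsL (n : ℕ) (a₁ a₂ a₃ : List ℤ) (c : ℤ) :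
    epsP n (a₁ ++ c :: a₃) + epsL a₂ =
      epsP n (a₁ ++ a₂ ++ a₃) + ((n : ℤ) + a₁.length + 1) * (c + 1)
        - ((n : ℤ) + a₁.length) * (a₂.sum + a₂.length)
        + (1 - (a₂.length : ℤ)) * (a₃.sum + a₃.length) + 1 := by
  have hcons : epsP n (a₁ ++ c :: a₃) = epsP n a₁ + ((n : ℤ) + a₁.length + 1) * (c + 1)
      + epsP n a₃ + ((a₁.length : ℤ) + 1) * (a₃.sum + a₃.length) := by
    rw [epsP_append, epsP_cons, Nat.add_assoc, epsP_add n (a₁.length + 1)]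
    push_cast
    ring
  have hblock : epsP n (a₁ ++ a₂ ++ a₃) = epsP n a₁ + epsP 0 a₂
      + ((n : ℤ) + a₁.length) * (a₂.sum + a₂.length)
      + epsP n a₃ + ((a₁.length : ℤ) + a₂.length) * (a₃.sum + a₃.length) := by
    have h₂ := epsP_add 0 (n + a₁.length) a₂
    rw [Nat.zero_add] at h₂
    rw [List.append_assoc, epsP_append, epsP_append, h₂, Nat.add_assoc,
      epsP_add n (a₁.length + a₂.length)]
    push_cast
    ring
  rw [hcons, hblock, epsL_eq_one_add_epsP_zero]
  ring

lemma List.take_append_take_drop_append_drop {α : Type*} (a : List α) (m k : ℕ) :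
    a.take m ++ (a.drop m).take k ++ a.drop (m + k) = a := by
  rw [← List.drop_drop, List.append_assoc, List.take_append_drop, List.take_append_drop]

/-- Splitting congruence for `ε_p` (Lemma 3.4(3) of the paper): with `k₁ = k + 1 − k₂` and
blocks `a⟨1⟩, a⟨2⟩, a⟨3⟩` of `a` as before,
`ε_p(a⟨1⟩, |a⟨2⟩|+g+k₂, a⟨3⟩) + ε(a⟨2⟩)
  ≡ ε_p(a) + |a| + k + |a⟨1⟩| + (i+n)·g + k₂·|a⟨3⟩| + k₁·k₂ + i·k₂ + n (mod 2)`. -/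
theorem epsP_split (n : ℕ) (a : List ℤ) (i k2 : ℕ) (g : ℤ)
    (hi1 : 1 ≤ i) (hi2 : i ≤ a.length + 1) (hk2 : k2 ≤ a.length + 1 - i) :
    Int.ModEq 2
      (epsP n (a.take (i - 1) ++
          (((a.drop (i - 1)).take k2).sum + g + (k2 : ℤ)) :: a.drop (i - 1 + k2))
        + epsL ((a.drop (i - 1)).take k2))
      (epsP n a + a.sum + (a.length : ℤ) + (a.take (i - 1)).sum
        + ((i : ℤ) + (n : ℤ)) * g + (k2 : ℤ) * (a.drop (i - 1 + k2)).sum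
        + ((a.length + 1 - k2 : ℕ) : ℤ) * (k2 : ℤ) + (i : ℤ) * (k2 : ℤ) + (n : ℤ)) := by
  set m := i - 1
  set a₁ := a.take m
  set a₂ := (a.drop m).take k2
  set a₃ := a.drop (m + k2)
  have hsplit : a₁ ++ a₂ ++ a₃ = a := a.take_append_take_drop_append_drop m k2
  have hlen₁ : a₁.length = m := List.length_take_of_le (by omega)
  have hlen₂ : a₂.length = k2 := List.length_take_of_le (by rw [List.length_drop]; omega)
  have hlen : a.length = m + k2 + a₃.length := by
    rw [← hsplit]; simp only [List.length_append, hlen₁, hlen₂]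
  have hk₁ : ((a.length + 1 - k2 : ℕ) : ℤ) = m + a₃.length + 1 := by push_cast [hlen]; omega
  have hi : (i : ℤ) = m + 1 := by omega
  rw [epsP_replace_block_add_epsL, hk₁, hi, ← hsplit, List.sum_append,
    List.sum_append, List.length_append, List.length_append, hlen₁, hlen₂]
  exact Int.modEq_iff_dvd.mpr
    ⟨a₁.sum + k2 * a₃.sum + k2 * a₃.length + (m + 1) * k2 - 1, by push_cast; ring⟩
end
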